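/- arXiv:cs/0508106 — 3 statements merged into one kernel-verified Lean document; each statement's English description precedes it below -/
import Mathlib

section
/- Let r be a flat rule p(X̃) ← (X̃ = s̃ ∧ Ỹ = t̃) ◇ q(Ỹ) and Δ = (τ, δ) a filter. If Δ is DNlog for r, then (DNsyn1) holds: the projection ⟨p(s̃) | true⟩|τ is more general than δ(p). -/
/- A formalization of binary CLP(C): terms, constraints, queries, rules,
   derivation steps, loops, projections, filters, DN / DNlog / DNsyn. -/

namespace CLP

/-- First-order terms over a signature of function symbols `F` with arities `arF`. -/
inductive Tm (F : Type) (arF : F → ℕ) : Type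
  | var : ℕ → Tm F arF
  | app : (f : F) → (Fin (arF f) → Tm F arF) → Tm F arF

variable {F : Type} {arF : F → ℕ} {Pc : Type} {arP : Pc → ℕ}
  {Prd : Type} {arPrd : Prd → ℕ} {D : Type}

/-- Variables of a term. -/
def Tm.fv : Tm F arF → Finset ℕ
  | .var x => {x}
  | .app _ ts => Finset.univ.biUnion fun i => (ts i).fv

/-- Apply a variable substitution to a term. -/
def Tm.rename (σ : ℕ → ℕ) : Tm F arF → Tm F arF
  | .var x => .var (σ x)
  | .app f ts => .app f fun i => (ts i).rename σ

/-- Finite conjunctions of primitive constraints (including equality). -/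
inductive Con (F : Type) (arF : F → ℕ) (Pc : Type) (arP : Pc → ℕ) : Type
  | tru : Con F arF Pc arP
  | eq : Tm F arF → Tm F arF → Con F arF Pc arP
  | prim : (c : Pc) → (Fin (arP c) → Tm F arF) → Con F arF Pc arP
  | and : Con F arF Pc arP → Con F arF Pc arP → Con F arF Pc arP

/-- Variables of a constraint. -/
def Con.fv : Con F arF Pc arP → Finset ℕ
  | .tru => ∅
  | .eq s t => s.fv ∪ t.fv
  | .prim _ ts => Finset.univ.biUnion fun i => (ts i).fv
  | .and c d => c.fv ∪ d.fv

/-- Apply a variable substitution to a constraint. -/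
def Con.rename (σ : ℕ → ℕ) : Con F arF Pc arP → Con F arF Pc arP
  | .tru => .tru
  | .eq s t => .eq (s.rename σ) (t.rename σ)
  | .prim c ts => .prim c fun i => (ts i).rename σ
  | .and c d => .and (c.rename σ) (d.rename σ)

/-- The domain of computation `D_C`: an interpretation of the function and
constraint-predicate symbols over a domain `D`. -/
structure Interp (F : Type) (arF : F → ℕ) (Pc : Type) (arP : Pc → ℕ) (D : Type) where
  fn : (f : F) → (Fin (arF f) → D) → D
  pr : (c : Pc) → (Fin (arP c) → D) → Prop

/-- Evaluation of a term under a valuation `v : Var → D`. -/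
def Tm.eval (If : (f : F) → (Fin (arF f) → D) → D) (v : ℕ → D) : Tm F arF → D
  | .var x => v x
  | .app f ts => If f fun i => (ts i).eval If v

/-- `D_C ⊨_v c`. -/
def Con.Sat (I : Interp F arF Pc arP D) (v : ℕ → D) : Con F arF Pc arP → Prop
  | .tru => True
  | .eq s t => s.eval I.fn v = t.eval I.fn v
  | .prim c ts => I.pr c fun i => (ts i).eval I.fn v
  | .and c d => c.Sat I v ∧ d.Sat I v

/-- A query `⟨p(t̃) | d⟩`. -/
structure Query (F : Type) (arF : F → ℕ) (Pc : Type) (arP : Pc → ℕ)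
    (Prd : Type) (arPrd : Prd → ℕ) where
  p : Prd
  args : Fin (arPrd p) → Tm F arF
  con : Con F arF Pc arP

/-- Variables of a query. -/
def Query.fv (S : Query F arF Pc arP Prd arPrd) : Finset ℕ :=
  (Finset.univ.biUnion fun i => (S.args i).fv) ∪ S.con.fv

/-- Apply a variable substitution to a query. -/
def Query.rename (σ : ℕ → ℕ) (S : Query F arF Pc arP Prd arPrd) :
    Query F arF Pc arP Prd arPrd :=
  ⟨S.p, fun i => (S.args i).rename σ, S.con.rename σ⟩

/-- The set `[S]` of atoms (predicate applied to domain values) described by a query `S`. -/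
def Query.set (I : Interp F arF Pc arP D) (S : Query F arF Pc arP Prd arPrd) :
    Set (Σ p : Prd, Fin (arPrd p) → D) :=
  { a | ∃ v : ℕ → D, S.con.Sat I v ∧ a = ⟨S.p, fun i => (S.args i).eval I.fn v⟩ }

/-- `S'` is more general than `S` iff `[S] ⊆ [S']`. -/
def MoreGen (I : Interp F arF Pc arP D) (S' S : Query F arF Pc arP Prd arPrd) : Prop :=
  S.set I ⊆ S'.set I

/-- A binary rule `p(s̃) ← c ◇ q(t̃)`. -/
structure Rule (F : Type) (arF : F → ℕ) (Pc : Type) (arP : Pc → ℕ)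
    (Prd : Type) (arPrd : Prd → ℕ) where
  hp : Prd
  hargs : Fin (arPrd hp) → Tm F arF
  con : Con F arF Pc arP
  bp : Prd
  bargs : Fin (arPrd bp) → Tm F arF

/-- Variables of a rule. -/
def Rule.fv (r : Rule F arF Pc arP Prd arPrd) : Finset ℕ :=
  (Finset.univ.biUnion fun i => (r.hargs i).fv) ∪ r.con.fv ∪
    (Finset.univ.biUnion fun i => (r.bargs i).fv)

/-- Apply a variable substitution to a rule. -/
def Rule.rename (σ : ℕ → ℕ) (r : Rule F arF Pc arP Prd arPrd) : Rule F arF Pc arP Prd arPrd :=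
  ⟨r.hp, fun i => (r.hargs i).rename σ, r.con.rename σ, r.bp, fun i => (r.bargs i).rename σ⟩

/-- `r'` is a variant of `r`: obtained by renaming the variables by a bijection. -/
def Rule.IsVariant (r r' : Rule F arF Pc arP Prd arPrd) : Prop :=
  ∃ ρ : ℕ ≃ ℕ, r' = r.rename ρ

/-- The query `⟨H | c⟩` of a rule `H ← c ◇ B`. -/
def Rule.headQuery (r : Rule F arF Pc arP Prd arPrd) : Query F arF Pc arP Prd arPrd :=
  ⟨r.hp, r.hargs, r.con⟩

/-- The query `⟨B | c⟩` of a rule `H ← c ◇ B`. -/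
def Rule.bodyQuery (r : Rule F arF Pc arP Prd arPrd) : Query F arF Pc arP Prd arPrd :=
  ⟨r.bp, r.bargs, r.con⟩

/-- The constraint `ũ = w̃` for two sequences of terms. -/
def argsEqCon {n : ℕ} (u w : Fin n → Tm F arF) : Con F arF Pc arP :=
  (List.ofFn fun i => Con.eq (u i) (w i)).foldr .and .tru

/-- The constraint `s̃' = ũ ∧ c' ∧ d` of the query resulting from a derivation step of
`S = ⟨p(ũ) | d⟩` with input rule `r' = p(s̃') ← c' ◇ q(t̃')`. -/
def stepCon (r' : Rule F arF Pc arP Prd arPrd) (S : Query F arF Pc arP Prd arPrd)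
    (h : r'.hp = S.p) : Con F arF Pc arP :=
  Con.and
    (argsEqCon (fun i : Fin (arPrd S.p) => r'.hargs (Fin.cast (congrArg arPrd h).symm i)) S.args)
    (Con.and r'.con S.con)

/-- Derivation step of `S` using the (already renamed-apart) input rule `r'`:
the constraint `s̃' = ũ ∧ c' ∧ d` must be satisfiable in `D_C`, and the resulting
query is `⟨q(t̃') | s̃' = ũ ∧ c' ∧ d⟩`. -/
def StepWith (I : Interp F arF Pc arP D) (r' : Rule F arF Pc arP Prd arPrd)
    (S T : Query F arF Pc arP Prd arPrd) : Prop :=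
  ∃ h : r'.hp = S.p, (∃ v : ℕ → D, (stepCon r' S h).Sat I v) ∧
    T = ⟨r'.bp, r'.bargs, stepCon r' S h⟩

/-- Derivation step `S ⟹_r T`: there is a variant `r'` of `r`, variable disjoint
with `S`, which is an input rule for a step from `S` to `T`. -/
def Step (I : Interp F arF Pc arP D) (r : Rule F arF Pc arP Prd arPrd)
    (S T : Query F arF Pc arP Prd arPrd) : Prop :=
  ∃ r' : Rule F arF Pc arP Prd arPrd,
    r.IsVariant r' ∧ Disjoint r'.fv S.fv ∧ StepWith I r' S T

/-- `S₀` loops w.r.t. the program `P`: there is an infinite derivation of `P ∪ {S₀}`,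
i.e. an infinite sequence of derivation steps whose input rules are variants of rules
of `P`, variable disjoint from `S₀` and from the input rules used at earlier steps
(standardization apart). -/
def Loops (I : Interp F arF Pc arP D) (P : Set (Rule F arF Pc arP Prd arPrd))
    (S₀ : Query F arF Pc arP Prd arPrd) : Prop :=
  ∃ (S : ℕ → Query F arF Pc arP Prd arPrd) (rv : ℕ → Rule F arF Pc arP Prd arPrd),
    S 0 = S₀ ∧
    ∀ n : ℕ, (∃ r ∈ P, r.IsVariant (rv n)) ∧
      Disjoint (rv n).fv S₀.fv ∧ (∀ m < n, Disjoint (rv n).fv (rv m).fv) ∧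
      StepWith I (rv n) (S n) (S (n + 1))

/-! ## Sets of positions, projections, filters -/

/-- The set `[S|τ]` of projected atoms described by the projection of a query on a
set of positions `τ`. -/
def Query.projSet (I : Interp F arF Pc arP D) (τ : ∀ p : Prd, Set (Fin (arPrd p)))
    (S : Query F arF Pc arP Prd arPrd) :
    Set (Σ p : Prd, {i : Fin (arPrd p) // i ∈ τ p} → D) :=
  { a | ∃ v : ℕ → D, S.con.Sat I v ∧ a = ⟨S.p, fun i => (S.args i.1).eval I.fn v⟩ }

/-- The complement `τ̄` of a set of positions. -/
def complPos (τ : ∀ p : Prd, Set (Fin (arPrd p))) : ∀ p : Prd, Set (Fin (arPrd p)) :=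
  fun p => (τ p)ᶜ

/-- A query over a projected predicate `p|τ`. -/
structure PQuery (F : Type) (arF : F → ℕ) (Pc : Type) (arP : Pc → ℕ)
    {Prd : Type} {arPrd : Prd → ℕ} (τ : ∀ p : Prd, Set (Fin (arPrd p))) (p : Prd) where
  args : {i : Fin (arPrd p) // i ∈ τ p} → Tm F arF
  con : Con F arF Pc arP

/-- The set of projected atoms described by a projected query. -/
def PQuery.set (I : Interp F arF Pc arP D) {τ : ∀ p : Prd, Set (Fin (arPrd p))} {p : Prd}
    (Q : PQuery F arF Pc arP τ p) :
    Set (Σ q : Prd, {i : Fin (arPrd q) // i ∈ τ q} → D) :=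
  { a | ∃ v : ℕ → D, Q.con.Sat I v ∧ a = ⟨p, fun i => (Q.args i).eval I.fn v⟩ }

/-- A filter `Δ = (τ, δ)`: a set of positions together with, for each predicate `p`,
a query `δ(p)` over the projected predicate `p|τ` with satisfiable constraint. -/
structure Filt {F : Type} {arF : F → ℕ} {Pc : Type} {arP : Pc → ℕ} {D : Type}
    (I : Interp F arF Pc arP D) (Prd : Type) (arPrd : Prd → ℕ) where
  τ : ∀ p : Prd, Set (Fin (arPrd p))
  δ : ∀ p : Prd, PQuery F arF Pc arP τ p
  δ_sat : ∀ p : Prd, ∃ v : ℕ → D, (δ p).con.Sat I v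

variable {I : Interp F arF Pc arP D}

/-- A query `S` satisfies the filter `Δ` iff `[S|τ] ⊆ [δ(rel(S))]`. -/
def Filt.Satisfies (Δ : Filt I Prd arPrd) (S : Query F arF Pc arP Prd arPrd) : Prop :=
  S.projSet I Δ.τ ⊆ (Δ.δ S.p).set I

/-- `S'` is `Δ`-more general than `S`: `S'|τ̄` is more general than `S|τ̄`
and `S'` satisfies `Δ`. -/
def Filt.DeltaMoreGen (Δ : Filt I Prd arPrd) (S' S : Query F arF Pc arP Prd arPrd) : Prop :=
  S.projSet I (complPos Δ.τ) ⊆ S'.projSet I (complPos Δ.τ) ∧ Δ.Satisfies S'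

/-- `Δ` is derivation neutral (DN) for `r`. -/
def Filt.DN (Δ : Filt I Prd arPrd) (r : Rule F arF Pc arP Prd arPrd) : Prop :=
  ∀ S T, Step I r S T → ∀ S', Δ.DeltaMoreGen S' S →
    ∃ T', Step I r S' T' ∧ Δ.DeltaMoreGen T' T

/-! ## Normalized rules and DNlog -/

/-- A normalized rule `p(X̃) ← c ◇ q(Ỹ)` where `X̃, Ỹ` are disjoint sequences of
distinct variables. -/
structure NRule (F : Type) (arF : F → ℕ) (Pc : Type) (arP : Pc → ℕ)
    (Prd : Type) (arPrd : Prd → ℕ) where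
  hp : Prd
  X : Fin (arPrd hp) → ℕ
  bp : Prd
  Y : Fin (arPrd bp) → ℕ
  hX : Function.Injective X
  hY : Function.Injective Y
  hXY : ∀ i j, X i ≠ Y j
  con : Con F arF Pc arP

/-- The underlying rule of a normalized rule. -/
def NRule.toRule (r : NRule F arF Pc arP Prd arPrd) : Rule F arF Pc arP Prd arPrd :=
  ⟨r.hp, fun i => .var (r.X i), r.con, r.bp, fun i => .var (r.Y i)⟩

/-- `local_var(r) = Var(c) ∖ (Var(X̃) ∪ Var(Ỹ))`. -/
def NRule.localVar (r : NRule F arF Pc arP Prd arPrd) : Set ℕ :=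
  ↑r.con.fv \ (Set.range r.X ∪ Set.range r.Y)

/-- `v` and `w` agree on all variables outside `W`. -/
def agreesOff (W : Set ℕ) (v w : ℕ → D) : Prop := ∀ x ∉ W, v x = w x

/-- Semantics under `v` of the formula `sat(s̃, Q) = ∃_{Var(Q')} (s̃ = ũ' ∧ d')`,
`Q'` a variable-disjoint variant of `Q = ⟨p|τ(ũ) | d⟩`. -/
def satFor (I : Interp F arF Pc arP D) {τ : ∀ p : Prd, Set (Fin (arPrd p))} {p : Prd}
    (s : {i : Fin (arPrd p) // i ∈ τ p} → Tm F arF) (Q : PQuery F arF Pc arP τ p)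
    (v : ℕ → D) : Prop :=
  ∃ w : ℕ → D, Q.con.Sat I w ∧ ∀ i, (s i).eval I.fn v = (Q.args i).eval I.fn w

/-- `Δ` is DNlog for a normalized rule `r = p(X̃) ← c ◇ q(Ỹ)`:
`D_C ⊨ c → ∀_{X̃|τ} [ sat(X̃|τ, δ(p)) → ∃_Y (sat(Ỹ|τ, δ(q)) ∧ c) ]` where
`Y = Var(Ỹ|τ) ∪ local_var(r)`. -/
def Filt.DNlog (Δ : Filt I Prd arPrd) (r : NRule F arF Pc arP Prd arPrd) : Prop :=
  ∀ v : ℕ → D, r.con.Sat I v →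
    ∀ v₁ : ℕ → D, agreesOff (r.X '' Δ.τ r.hp) v₁ v →
      satFor I (fun i => Tm.var (r.X i.1)) (Δ.δ r.hp) v₁ →
        ∃ v₂ : ℕ → D,
          agreesOff (r.Y '' Δ.τ r.bp ∪ r.localVar) v₂ v₁ ∧
          satFor I (fun i => Tm.var (r.Y i.1)) (Δ.δ r.bp) v₂ ∧ r.con.Sat I v₂

/-! ## Flat rules and DNsyn -/

/-- Variables of a sequence of terms. -/
def varsOf {n : ℕ} (s : Fin n → Tm F arF) : Finset ℕ :=
  Finset.univ.biUnion fun i => (s i).fv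

/-- Variables of the projection of a sequence of terms on a set of positions. -/
def varsOfProj {n : ℕ} (σ : Set (Fin n)) (s : Fin n → Tm F arF) : Set ℕ :=
  ⋃ i : {i : Fin n // i ∈ σ}, ↑(s i.1).fv

/-- A flat rule `p(X̃) ← (X̃ = s̃ ∧ Ỹ = t̃) ◇ q(Ỹ)` with `Var(s̃, t̃)` local. -/
structure FlatRule (F : Type) (arF : F → ℕ) (Pc : Type) (arP : Pc → ℕ)
    (Prd : Type) (arPrd : Prd → ℕ) extends NRule F arF Pc arP Prd arPrd where
  s : Fin (arPrd hp) → Tm F arF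
  t : Fin (arPrd bp) → Tm F arF
  con_eq : con = Con.and (argsEqCon (fun i => Tm.var (X i)) s)
                         (argsEqCon (fun i => Tm.var (Y i)) t)
  local_args : ∀ x ∈ varsOf s ∪ varsOf t, x ∉ Set.range X ∪ Set.range Y

/-! ## The constraint domain Term (logic programming) -/

/-- Finite trees (ground terms) over `F`. -/
inductive GTm (F : Type) (arF : F → ℕ) : Type
  | app : (f : F) → (Fin (arF f) → GTm F arF) → GTm F arF

/-- Arities for the empty set of constraint-predicate symbols (only `=` is available). -/
def emptyAr : Empty → ℕ := fun c => c.elim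

/-- The domain of computation of the constraint domain `Term`: the algebra of
finite trees, with no primitive constraints but equality. -/
def termInterp (F : Type) (arF : F → ℕ) : Interp F arF Empty emptyAr (GTm F arF) :=
  ⟨fun f ts => GTm.app f ts, fun c => c.elim⟩

end CLP

namespace CLP
variable {F : Type} {arF : F → ℕ} {Pc : Type} {arP : Pc → ℕ}
  {Prd : Type} {arPrd : Prd → ℕ} {D : Type}

lemma eval_congr (If : (f : F) → (Fin (arF f) → D) → D) (v w : ℕ → D) (t : Tm F arF)
    (h : ∀ x ∈ t.fv, v x = w x) : t.eval If v = t.eval If w := by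
  induction t with
  | var x => exact h x (by simp [Tm.fv])
  | app f ts ih =>
    simp only [Tm.eval]
    congr 1; funext i
    exact ih i (fun x hx => h x (by simp [Tm.fv]; exact ⟨i, hx⟩))

lemma sat_foldr (I : Interp F arF Pc arP D) (v : ℕ → D) (l : List (Con F arF Pc arP)) :
    (l.foldr Con.and Con.tru).Sat I v ↔ ∀ c ∈ l, c.Sat I v := by
  induction l with
  | nil => simp [Con.Sat]
  | cons c l ih => simp [Con.Sat, ih]

lemma sat_argsEqCon (I : Interp F arF Pc arP D) (v : ℕ → D) {n : ℕ}
    (u w : Fin n → Tm F arF) :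
    (argsEqCon (Pc := Pc) (arP := arP) u w).Sat I v ↔
      ∀ i, (u i).eval I.fn v = (w i).eval I.fn v := by
  rw [argsEqCon, sat_foldr]
  constructor
  · intro h i
    exact h _ (by rw [List.mem_ofFn]; exact ⟨i, rfl⟩)
  · intro h c hc
    rw [List.mem_ofFn] at hc
    obtain ⟨i, rfl⟩ := hc
    exact h i

end CLP

open CLP in
/-- for a flat rule `r`, if `Δ` is DNlog for `r` then (DNsyn1)
holds: `⟨p(s̃) | true⟩|τ` is more general than `δ(p)`. -/
theorem stmt13 {F : Type} {arF : F → ℕ} {Pc : Type} {arP : Pc → ℕ}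
    {Prd : Type} {arPrd : Prd → ℕ} {D : Type} {I : Interp F arF Pc arP D}
    (Δ : Filt I Prd arPrd) (r : FlatRule F arF Pc arP Prd arPrd)
    (h : Δ.DNlog r.toNRule) :
    (Δ.δ r.hp).set I ⊆
      PQuery.set I (⟨fun i => r.s i.1, Con.tru⟩ : PQuery F arF Pc arP Δ.τ r.hp) := by
  classical
  rintro a ⟨w, hwsat, rfl⟩
  -- base valuation making r.con true
  set v : ℕ → D := fun x =>
    if hx : ∃ i, r.X i = x then (r.s hx.choose).eval I.fn w
    else if hy : ∃ j, r.Y j = x then (r.t hy.choose).eval I.fn w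
    else w x with hv_def
  have hvX : ∀ i, v (r.X i) = (r.s i).eval I.fn w := by
    intro i
    have hx : ∃ i', r.X i' = r.X i := ⟨i, rfl⟩
    have : hx.choose = i := r.hX hx.choose_spec
    simp [hv_def, dif_pos hx, this]
  have hvY : ∀ j, v (r.Y j) = (r.t j).eval I.fn w := by
    intro j
    have hx : ¬ ∃ i', r.X i' = r.Y j := by
      rintro ⟨i', hi'⟩; exact r.hXY i' j hi'
    have hy : ∃ j', r.Y j' = r.Y j := ⟨j, rfl⟩
    have : hy.choose = j := r.hY hy.choose_spec
    simp [hv_def, dif_neg hx, dif_pos hy, this]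
  have hv_out : ∀ x, x ∉ Set.range r.X ∪ Set.range r.Y → v x = w x := by
    intro x hx
    have h1 : ¬ ∃ i, r.X i = x := fun ⟨i, hi⟩ => hx (Or.inl ⟨i, hi⟩)
    have h2 : ¬ ∃ j, r.Y j = x := fun ⟨j, hj⟩ => hx (Or.inr ⟨j, hj⟩)
    simp [hv_def, dif_neg h1, dif_neg h2]
  have hev_s : ∀ i, (r.s i).eval I.fn v = (r.s i).eval I.fn w := by
    intro i
    refine eval_congr _ _ _ _ fun x hx => hv_out x ?_
    exact r.local_args x (Finset.mem_union_left _ (Finset.mem_biUnion.2 ⟨i, Finset.mem_univ _, hx⟩))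
  have hev_t : ∀ j, (r.t j).eval I.fn v = (r.t j).eval I.fn w := by
    intro j
    refine eval_congr _ _ _ _ fun x hx => hv_out x ?_
    exact r.local_args x (Finset.mem_union_right _ (Finset.mem_biUnion.2 ⟨j, Finset.mem_univ _, hx⟩))
  have hvcon : r.con.Sat I v := by
    rw [r.con_eq]
    refine ⟨(sat_argsEqCon I v _ _).2 fun i => ?_, (sat_argsEqCon I v _ _).2 fun j => ?_⟩
    · show v (r.X i) = (r.s i).eval I.fn v
      rw [hvX, hev_s]
    · show v (r.Y j) = (r.t j).eval I.fn v
      rw [hvY, hev_t]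
  -- v₁ : update v on X '' τ(p) with the values of δ(p) args under w
  set v₁ : ℕ → D := fun x =>
    if hx : ∃ i : {i : Fin (arPrd r.hp) // i ∈ Δ.τ r.hp}, r.X i.1 = x
    then ((Δ.δ r.hp).args hx.choose).eval I.fn w
    else v x with hv₁_def
  have hv₁X : ∀ i : {i : Fin (arPrd r.hp) // i ∈ Δ.τ r.hp},
      v₁ (r.X i.1) = ((Δ.δ r.hp).args i).eval I.fn w := by
    intro i
    have hx : ∃ i' : {i : Fin (arPrd r.hp) // i ∈ Δ.τ r.hp}, r.X i'.1 = r.X i.1 := ⟨i, rfl⟩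
    have h2 : hx.choose = i := Subtype.ext (r.hX hx.choose_spec)
    show (if hx : _ then _ else _) = _
    rw [dif_pos hx, h2]
  have hagree : agreesOff (r.X '' Δ.τ r.hp) v₁ v := by
    intro x hx
    have h1 : ¬ ∃ i : {i : Fin (arPrd r.hp) // i ∈ Δ.τ r.hp}, r.X i.1 = x := by
      rintro ⟨i, rfl⟩; exact hx ⟨i.1, i.2, rfl⟩
    show (if hx : _ then _ else _) = _
    rw [dif_neg h1]
  have hsatX : satFor I (fun i : {i : Fin (arPrd r.hp) // i ∈ Δ.τ r.hp} =>
      Tm.var (r.X i.1)) (Δ.δ r.hp) v₁ :=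
    ⟨w, hwsat, fun i => hv₁X i⟩
  obtain ⟨v₂, hag₂, _, hcon₂⟩ := h v hvcon v₁ hagree hsatX
  -- extract X i = s i under v₂
  rw [r.con_eq] at hcon₂
  have hX₂ := (sat_argsEqCon I v₂ _ _).1 hcon₂.1
  have key : ∀ i : {i : Fin (arPrd r.hp) // i ∈ Δ.τ r.hp},
      ((Δ.δ r.hp).args i).eval I.fn w = (r.s i.1).eval I.fn v₂ := by
    intro i
    have hx2 : v₂ (r.X i.1) = v₁ (r.X i.1) := by
      refine hag₂ _ ?_
      rintro (⟨j, _, hj⟩ | hloc)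
      · exact r.hXY i.1 j hj.symm
      · exact hloc.2 (Or.inl ⟨i.1, rfl⟩)
    have := hX₂ i.1
    simp only [Tm.eval] at this
    rw [← this, hx2, hv₁X]
  refine ⟨v₂, trivial, ?_⟩
  have hfun : (fun i : {i : Fin (arPrd r.hp) // i ∈ Δ.τ r.hp} =>
      ((Δ.δ r.hp).args i).eval I.fn w) = fun i => (r.s i.1).eval I.fn v₂ :=
    funext fun i => key i
  rw [hfun]
end

section
/- If a filter Δ = (τ, δ) induces a reflexive 'Δ-more general than' relation on all queries (every query with satisfiable constraint is Δ-more general than itself), then for all queries S, S': S' is Δ-more general than S if and only if S'|τ̄ is more general than S|τ̄. -/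
open CLP in
/-- if the `Δ`-more-general relation is reflexive on all queries
with satisfiable constraint, then `S'` is `Δ`-more general than `S` iff `S'|τ̄`
is more general than `S|τ̄`. -/
theorem stmt16 {F : Type} {arF : F → ℕ} {Pc : Type} {arP : Pc → ℕ}
    {Prd : Type} {arPrd : Prd → ℕ} {D : Type} {I : Interp F arF Pc arP D}
    (Δ : Filt I Prd arPrd)
    (hrefl : ∀ S : Query F arF Pc arP Prd arPrd,
      (∃ v : ℕ → D, S.con.Sat I v) → Δ.DeltaMoreGen S S)
    (S' S : Query F arF Pc arP Prd arPrd) :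
    Δ.DeltaMoreGen S' S ↔
      S.projSet I (complPos Δ.τ) ⊆ S'.projSet I (complPos Δ.τ) := by
  constructor
  · exact fun h => h.1
  · intro h
    refine ⟨h, ?_⟩
    by_cases hs : ∃ v : ℕ → D, S'.con.Sat I v
    · exact (hrefl S' hs).2
    · intro a ha
      obtain ⟨v, hv, _⟩ := ha
      exact absurd ⟨v, hv⟩ hs
end

section
/- Let Δ be a filter that is DN for every rule of a program P. If a query S loops with respect to P and S' is Δ-more general than S, then S' loops with respect to P. -/
/- Each step `Sᵢ ⟹ Sᵢ₊₁` of the infinite derivation of `S` is lifted, by DN, to a step from a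
query that is Δ-more general than `Sᵢ` to one that is Δ-more general than `Sᵢ₊₁`. To keep the
lifted derivation standardized apart, the input rule of each lifted step is renamed by a
permutation fixing the current query and moving the rule's variables away from everything used
so far; the resulting query is renamed along, which preserves Δ-more-generality since the
sets of atoms a query describes do not depend on the names of its variables. -/

namespace CLP

variable {F : Type} {arF : F → ℕ} {Pc : Type} {arP : Pc → ℕ}
  {Prd : Type} {arPrd : Prd → ℕ} {D : Type} {I : Interp F arF Pc arP D}

theorem Tm.eval_rename (If : (f : F) → (Fin (arF f) → D) → D) (σ : ℕ → ℕ) (v : ℕ → D) :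
    ∀ t : Tm F arF, (t.rename σ).eval If v = t.eval If (v ∘ σ)
  | .var _ => rfl
  | .app f ts => by simp only [Tm.rename, Tm.eval, Tm.eval_rename If σ v]

theorem Con.sat_rename (σ : ℕ → ℕ) (v : ℕ → D) :
    ∀ c : Con F arF Pc arP, (c.rename σ).Sat I v ↔ c.Sat I (v ∘ σ)
  | .tru => Iff.rfl
  | .eq s t => by simp only [Con.rename, Con.Sat, Tm.eval_rename]
  | .prim c ts => by simp only [Con.rename, Con.Sat, Tm.eval_rename]
  | .and c d => by simp only [Con.rename, Con.Sat, Con.sat_rename σ v c, Con.sat_rename σ v d]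

theorem Tm.fv_rename (σ : ℕ → ℕ) : ∀ t : Tm F arF, (t.rename σ).fv = t.fv.image σ
  | .var _ => by simp [Tm.rename, Tm.fv]
  | .app f ts => by
    simp only [Tm.rename, Tm.fv, Finset.biUnion_image, Tm.fv_rename σ]

theorem Con.fv_rename (σ : ℕ → ℕ) : ∀ c : Con F arF Pc arP, (c.rename σ).fv = c.fv.image σ
  | .tru => rfl
  | .eq s t => by simp only [Con.rename, Con.fv, Tm.fv_rename, Finset.image_union]
  | .prim c ts => by simp only [Con.rename, Con.fv, Finset.biUnion_image, Tm.fv_rename]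
  | .and c d => by
    simp only [Con.rename, Con.fv, Con.fv_rename σ c, Con.fv_rename σ d, Finset.image_union]

theorem Rule.fv_rename (σ : ℕ → ℕ) (r : Rule F arF Pc arP Prd arPrd) :
    (r.rename σ).fv = r.fv.image σ := by
  simp only [Rule.rename, Rule.fv, Finset.image_union, Finset.biUnion_image, Con.fv_rename,
    Tm.fv_rename]
  rfl

theorem Tm.rename_eq_self {σ : ℕ → ℕ} :
    ∀ {t : Tm F arF}, (∀ x ∈ t.fv, σ x = x) → t.rename σ = t
  | .var x, h => by simp [Tm.rename, h x (by simp [Tm.fv])]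
  | .app f ts, h => by
    simp only [Tm.rename, Tm.app.injEq, heq_eq_eq, true_and]
    exact funext fun i => Tm.rename_eq_self fun x hx =>
      h x (Finset.mem_biUnion.2 ⟨i, Finset.mem_univ i, hx⟩)

theorem Con.rename_eq_self {σ : ℕ → ℕ} :
    ∀ {c : Con F arF Pc arP}, (∀ x ∈ c.fv, σ x = x) → c.rename σ = c
  | .tru, _ => rfl
  | .eq s t, h => by
    simp only [Con.fv, Finset.mem_union] at h
    simp only [Con.rename, Tm.rename_eq_self fun x hx => h x (.inl hx),
      Tm.rename_eq_self fun x hx => h x (.inr hx)]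
  | .prim c ts, h => by
    simp only [Con.rename, Con.prim.injEq, heq_eq_eq, true_and]
    exact funext fun i => Tm.rename_eq_self fun x hx =>
      h x (Finset.mem_biUnion.2 ⟨i, Finset.mem_univ i, hx⟩)
  | .and c d, h => by
    simp only [Con.fv, Finset.mem_union] at h
    simp only [Con.rename, Con.rename_eq_self fun x hx => h x (.inl hx),
      Con.rename_eq_self fun x hx => h x (.inr hx)]

theorem Tm.rename_rename (σ σ' : ℕ → ℕ) :
    ∀ t : Tm F arF, (t.rename σ).rename σ' = t.rename (σ' ∘ σ)
  | .var _ => rfl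
  | .app f ts => by simp only [Tm.rename, Tm.rename_rename σ σ']

theorem Con.rename_rename (σ σ' : ℕ → ℕ) :
    ∀ c : Con F arF Pc arP, (c.rename σ).rename σ' = c.rename (σ' ∘ σ)
  | .tru => rfl
  | .eq s t => by simp only [Con.rename, Tm.rename_rename]
  | .prim c ts => by simp only [Con.rename, Tm.rename_rename]
  | .and c d => by simp only [Con.rename, Con.rename_rename σ σ']

theorem Rule.rename_rename (σ σ' : ℕ → ℕ) (r : Rule F arF Pc arP Prd arPrd) :
    (r.rename σ).rename σ' = r.rename (σ' ∘ σ) := by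
  simp only [Rule.rename, Con.rename_rename, Tm.rename_rename]

theorem Rule.IsVariant.rename {r r' : Rule F arF Pc arP Prd arPrd} (h : r.IsVariant r')
    (ρ : ℕ ≃ ℕ) : r.IsVariant (r'.rename ρ) := by
  obtain ⟨ρ₀, rfl⟩ := h
  exact ⟨ρ₀.trans ρ, Rule.rename_rename _ _ r⟩

theorem Con.rename_foldr_and (σ : ℕ → ℕ) (l : List (Con F arF Pc arP)) :
    (l.foldr Con.and Con.tru).rename σ = (l.map (Con.rename σ)).foldr Con.and Con.tru := by
  induction l with
  | nil => rfl
  | cons c l ih => simp only [List.foldr_cons, List.map_cons, Con.rename, ih]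

theorem argsEqCon_rename (σ : ℕ → ℕ) {n : ℕ} (u w : Fin n → Tm F arF) :
    (argsEqCon (Pc := Pc) (arP := arP) u w).rename σ
      = argsEqCon (fun i => (u i).rename σ) (fun i => (w i).rename σ) := by
  simp only [argsEqCon, Con.rename_foldr_and, List.map_ofFn]
  rfl

theorem Con.fv_foldr_and_subset {l : List (Con F arF Pc arP)} {s : Finset ℕ}
    (h : ∀ c ∈ l, c.fv ⊆ s) : (l.foldr Con.and Con.tru).fv ⊆ s := by
  induction l with
  | nil => exact Finset.empty_subset s
  | cons c l ih =>
    simp only [List.mem_cons, forall_eq_or_imp] at h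
    exact Finset.union_subset h.1 (ih h.2)

theorem argsEqCon_fv_subset {n : ℕ} (u w : Fin n → Tm F arF) :
    (argsEqCon (Pc := Pc) (arP := arP) u w).fv ⊆ varsOf u ∪ varsOf w := by
  refine Con.fv_foldr_and_subset fun c hc => ?_
  obtain ⟨i, rfl⟩ := List.mem_ofFn.1 hc
  exact Finset.union_subset_union (Finset.subset_biUnion_of_mem (fun i => (u i).fv)
    (Finset.mem_univ i)) (Finset.subset_biUnion_of_mem (fun i => (w i).fv) (Finset.mem_univ i))

theorem StepWith.fv_subset {r' : Rule F arF Pc arP Prd arPrd} {S T : Query F arF Pc arP Prd arPrd}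
    (h : StepWith I r' S T) : T.fv ⊆ r'.fv ∪ S.fv := by
  obtain ⟨hp, -, rfl⟩ := h
  have hhead : varsOf (fun i => r'.hargs (Fin.cast (congrArg arPrd hp).symm i)) ⊆
      varsOf r'.hargs :=
    Finset.biUnion_subset.2 fun i _ => Finset.subset_biUnion_of_mem (fun i => (r'.hargs i).fv)
      (Finset.mem_univ _)
  have hunify := (argsEqCon_fv_subset (Pc := Pc) (arP := arP) _ S.args).trans
    (Finset.union_subset_union_left hhead)
  intro x hx
  have := @hunify x
  simp only [Query.fv, stepCon, Con.fv, Rule.fv, varsOf, Finset.mem_union] at hx this ⊢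
  tauto

theorem StepWith.rename {r' : Rule F arF Pc arP Prd arPrd} {S T : Query F arF Pc arP Prd arPrd}
    (h : StepWith I r' S T) (ρ : ℕ ≃ ℕ) (hfix : ∀ x ∈ S.fv, ρ x = x) :
    StepWith I (r'.rename ρ) S (T.rename ρ) := by
  obtain ⟨hp, ⟨v, hv⟩, rfl⟩ := h
  have hp' : (r'.rename ρ).hp = S.p := hp
  have hargs : (fun i => (S.args i).rename ρ) = S.args := funext fun i =>
    Tm.rename_eq_self fun x hx =>
      hfix x (Finset.mem_union_left _ (Finset.mem_biUnion.2 ⟨i, Finset.mem_univ i, hx⟩))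
  have hcon : S.con.rename ρ = S.con :=
    Con.rename_eq_self fun x hx => hfix x (Finset.mem_union_right _ hx)
  have hstep : (stepCon r' S hp).rename ρ = stepCon (r'.rename ρ) S hp' := by
    simp only [stepCon, Con.rename, argsEqCon_rename, hcon, hargs]
    rfl
  refine ⟨hp', ⟨v ∘ ρ.symm, ?_⟩, ?_⟩
  · rw [← hstep, Con.sat_rename, Function.comp_assoc, Equiv.symm_comp_self]
    exact hv
  · simp only [Query.rename, hstep]
    rfl

theorem Query.projSet_rename (τ : ∀ p : Prd, Set (Fin (arPrd p))) (ρ : ℕ ≃ ℕ)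
    (S : Query F arF Pc arP Prd arPrd) : (S.rename ρ).projSet I τ = S.projSet I τ := by
  ext a
  constructor
  · rintro ⟨v, hv, rfl⟩
    exact ⟨v ∘ ρ, (Con.sat_rename _ _ _).1 hv, by simp only [Query.rename, Tm.eval_rename]; rfl⟩
  · rintro ⟨v, hv, rfl⟩
    refine ⟨v ∘ ρ.symm, (Con.sat_rename _ _ _).2 ?_, ?_⟩
    · simpa only [Function.comp_assoc, Equiv.symm_comp_self, Function.comp_id] using hv
    · simp only [Query.rename, Tm.eval_rename, Function.comp_assoc, Equiv.symm_comp_self,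
        Function.comp_id]
      rfl

theorem Filt.DeltaMoreGen.rename_left {Δ : Filt I Prd arPrd} {S' S : Query F arF Pc arP Prd arPrd}
    (h : Δ.DeltaMoreGen S' S) (ρ : ℕ ≃ ℕ) : Δ.DeltaMoreGen (S'.rename ρ) S := by
  obtain ⟨hcompl, hsat⟩ := h
  refine ⟨Query.projSet_rename _ ρ S' ▸ hcompl, ?_⟩
  show (S'.rename ρ).projSet I Δ.τ ⊆ _
  rw [Query.projSet_rename]
  exact hsat

theorem exists_perm_fix_and_avoid (K A B : Finset ℕ) (hKA : Disjoint K A) :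
    ∃ ρ : ℕ ≃ ℕ, (∀ x ∈ A, ρ x = x) ∧ ∀ x ∈ K, ρ x ∉ B := by
  classical
  obtain ⟨N, hN⟩ := (K ∪ A ∪ B).exists_nat_subset_range
  have hlt : ∀ x ∈ K ∪ A ∪ B, x < N := fun x hx => Finset.mem_range.1 (hN hx)
  -- `ρ` swaps each `x ∈ K` with `x + N`.
  let f : K ⊕ K ↪ ℕ :=
    ⟨Sum.elim (↑) (↑· + N), Subtype.val_injective.sumElim
      (fun a b h => Subtype.ext (Nat.add_right_cancel h))
      fun a b h => by have := hlt a (by simp); omega⟩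
  refine ⟨Equiv.Perm.viaFintypeEmbedding (Equiv.sumComm K K) f, fun x hx => ?_, fun x hx => ?_⟩
  · refine Equiv.Perm.viaFintypeEmbedding_apply_notMem_range _ _ ?_
    rintro ⟨a | a, rfl⟩
    · exact Finset.disjoint_left.1 hKA a.2 hx
    · have := hlt (f (.inr a)) (by simp [hx])
      simp [f] at this
  · have hswap : Equiv.Perm.viaFintypeEmbedding (Equiv.sumComm K K) f x = x + N :=
      Equiv.Perm.viaFintypeEmbedding_apply_image _ f (.inl ⟨x, hx⟩)
    rw [hswap]
    exact fun hB => absurd (hlt (x + N) (by simp [hB])) (by omega)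

theorem Step.exists_stepWith_fresh {r : Rule F arF Pc arP Prd arPrd}
    {S T : Query F arF Pc arP Prd arPrd} (h : Step I r S T) (V : Finset ℕ) :
    ∃ (r' : Rule F arF Pc arP Prd arPrd) (ρ : ℕ ≃ ℕ),
      r.IsVariant r' ∧ Disjoint r'.fv V ∧ StepWith I r' S (T.rename ρ) := by
  obtain ⟨r', hvar, hdisj, hstep⟩ := h
  obtain ⟨ρ, hfix, hfresh⟩ := exists_perm_fix_and_avoid r'.fv S.fv V hdisj
  refine ⟨r'.rename ρ, ρ, hvar.rename ρ, ?_, hstep.rename ρ hfix⟩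
  rw [Rule.fv_rename]
  refine Finset.disjoint_left.2 fun y hy => ?_
  obtain ⟨x, hx, rfl⟩ := Finset.mem_image.1 hy
  exact hfresh x hx

theorem fv_subset_of_stepWith_chain {Sq : ℕ → Query F arF Pc arP Prd arPrd}
    {rv : ℕ → Rule F arF Pc arP Prd arPrd} (h : ∀ n, StepWith I (rv n) (Sq n) (Sq (n + 1)))
    (n : ℕ) : (Sq n).fv ⊆ (Sq 0).fv ∪ (Finset.range n).biUnion fun m => (rv m).fv := by
  induction n with
  | zero => simp
  | succ n ih =>
    refine (h n).fv_subset.trans (Finset.union_subset ?_ (ih.trans ?_))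
    · exact Finset.subset_union_right.trans'
        (Finset.subset_biUnion_of_mem (fun m => (rv m).fv) (Finset.self_mem_range_succ n))
    · exact Finset.union_subset_union_right
        (Finset.biUnion_subset_biUnion_of_subset_left _ (Finset.range_subset_range.2 n.le_succ))

theorem Loops.exists_steps {P : Set (Rule F arF Pc arP Prd arPrd)}
    {S₀ : Query F arF Pc arP Prd arPrd} (h : Loops I P S₀) :
    ∃ Sq : ℕ → Query F arF Pc arP Prd arPrd, Sq 0 = S₀ ∧
      ∀ n, ∃ r ∈ P, Step I r (Sq n) (Sq (n + 1)) := by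
  obtain ⟨Sq, rv, rfl, h⟩ := h
  refine ⟨Sq, rfl, fun n => ?_⟩
  obtain ⟨⟨r, hr, hvar⟩, h₀, hprev, hstep⟩ := h n
  have hfresh : Disjoint (rv n).fv ((Sq 0).fv ∪ (Finset.range n).biUnion fun m => (rv m).fv) :=
    Finset.disjoint_union_right.2
      ⟨h₀, (Finset.disjoint_biUnion_right _ _ _).2 fun m hm => hprev m (Finset.mem_range.1 hm)⟩
  exact ⟨r, hr, rv n, hvar, hfresh.mono_right
    (fv_subset_of_stepWith_chain (fun n => (h n).2.2.2) n), hstep⟩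

theorem loops_of_invariant {P : Set (Rule F arF Pc arP Prd arPrd)}
    {S₀ : Query F arF Pc arP Prd arPrd} (Inv : ℕ → Query F arF Pc arP Prd arPrd → Prop)
    (h₀ : Inv 0 S₀)
    (hstep : ∀ n q (V : Finset ℕ), Inv n q → ∃ (r' : Rule F arF Pc arP Prd arPrd) (q' : _),
      (∃ r ∈ P, r.IsVariant r') ∧ Disjoint r'.fv V ∧ StepWith I r' q q' ∧ Inv (n + 1) q') :
    Loops I P S₀ := by
  have : Nonempty (Query F arF Pc arP Prd arPrd) := ⟨S₀⟩
  have : Nonempty (Rule F arF Pc arP Prd arPrd) := ⟨⟨S₀.p, S₀.args, S₀.con, S₀.p, S₀.args⟩⟩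
  choose! rl next hrl hdisj hsw hinv using hstep
  -- The state after `n` steps: the current query and all variables used so far.
  let st : ℕ → Query F arF Pc arP Prd arPrd × Finset ℕ := fun n =>
    Nat.rec (S₀, S₀.fv) (fun n s => (next n s.1 s.2, s.2 ∪ (rl n s.1 s.2).fv)) n
  let R n := rl n (st n).1 (st n).2
  have hInv : ∀ n, Inv n (st n).1 := fun n => Nat.rec h₀ (fun n ih => hinv n _ _ ih) n
  have hused : ∀ n, (st n).2 = S₀.fv ∪ (Finset.range n).biUnion fun m => (R m).fv := by
    intro n
    induction n with
    | zero => simp [st]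
    | succ n ih =>
      rw [Finset.range_add_one, Finset.biUnion_insert, Finset.union_left_comm, ← ih,
        Finset.union_comm]
  refine ⟨fun n => (st n).1, R, rfl, fun n =>
    ⟨hrl n _ _ (hInv n), ?_, fun m hm => ?_, hsw n _ _ (hInv n)⟩⟩
  · exact (hdisj n _ _ (hInv n)).mono_right (hused n ▸ Finset.subset_union_left)
  · exact (hdisj n _ _ (hInv n)).mono_right (hused n ▸ Finset.subset_union_right.trans'
      (Finset.subset_biUnion_of_mem (fun m => (R m).fv) (Finset.mem_range.2 hm)))

end CLP

open CLP in
/-- if `Δ` is DN for every rule of `P`, `S` loops w.r.t. `P` and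
`S'` is `Δ`-more general than `S`, then `S'` loops w.r.t. `P`. -/
theorem stmt19 {F : Type} {arF : F → ℕ} {Pc : Type} {arP : Pc → ℕ}
    {Prd : Type} {arPrd : Prd → ℕ} {D : Type} {I : Interp F arF Pc arP D}
    (Δ : Filt I Prd arPrd) (P : Set (Rule F arF Pc arP Prd arPrd))
    (hDN : ∀ r ∈ P, Δ.DN r)
    (S S' : Query F arF Pc arP Prd arPrd)
    (h : Loops I P S) (hmg : Δ.DeltaMoreGen S' S) :
    Loops I P S' := by
  obtain ⟨Sq, rfl, hsteps⟩ := h.exists_steps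
  refine loops_of_invariant (fun n q => Δ.DeltaMoreGen q (Sq n)) hmg fun n q V hq => ?_
  obtain ⟨r, hr, hstep⟩ := hsteps n
  obtain ⟨T', hstep', hT'⟩ := hDN r hr _ _ hstep q hq
  obtain ⟨r', ρ, hvar, hfresh, hstepWith⟩ := hstep'.exists_stepWith_fresh V
  exact ⟨r', T'.rename ρ, ⟨r, hr, hvar⟩, hfresh, hstepWith, hT'.rename_left ρ⟩
end
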